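/- arXiv:2202.12045 — 5 statements merged into one kernel-verified Lean document; each statement's English description precedes it below -/
import Mathlib

section
/- Let α = (1,2,…,a) and β = (a−b+1, a−b+2, …, 2a−b) be two cycles on the set {1,2,…,n} with n = 2a−b, a ≥ 2 and 1 ≤ b < a. Then the permutation group generated by α and β acts 2-transitively on {1,2,…,n}: for all x ≠ y and w ≠ z in {1,…,n} there is a permutation π in the group with π(x) = w and π(y) = z. -/
open Equiv

/-- The cycle `(s, s+1, …, s+len-1)` as a permutation of `ℕ`. -/
def natCycle (s len : ℕ) : Equiv.Perm ℕ :=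
  List.formPerm ((List.range len).map (· + s))

lemma natCycle_pow_apply (s len m i : ℕ) (h : i < len) :
    ((natCycle s len) ^ m) (i + s) = (i + m) % len + s := by
  unfold natCycle
  have hnd : ((List.range len).map (· + s)).Nodup :=
    List.Nodup.map (fun x y hxy => by omega) (List.nodup_range (n := len))
  have h1 : i < ((List.range len).map (· + s)).length := by simpa using h
  have := List.formPerm_pow_apply_getElem _ hnd m i h1
  simpa using this

lemma natCycle_pow_fix (s len m x : ℕ) (h : x < s ∨ s + len ≤ x) :
    ((natCycle s len) ^ m) x = x := by
  have hx : x ∉ (List.range len).map (· + s) := by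
    simp only [List.mem_map, List.mem_range]
    rintro ⟨i, hi, rfl⟩; omega
  have hfix : natCycle s len x = x := List.formPerm_apply_of_notMem hx
  induction m with
  | zero => simp
  | succ m ih => rw [pow_succ, Equiv.Perm.mul_apply, hfix, ih]

lemma alpha_pow (a m x : ℕ) (h1 : 1 ≤ x) (h2 : x ≤ a) :
    ((natCycle 1 a) ^ m) x = (x - 1 + m) % a + 1 := by
  have hx : x = (x - 1) + 1 := by omega
  calc ((natCycle 1 a) ^ m) x = ((natCycle 1 a) ^ m) ((x - 1) + 1) := by rw [← hx]
    _ = (x - 1 + m) % a + 1 := natCycle_pow_apply 1 a m (x - 1) (by omega)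

lemma beta_pow (c a m x : ℕ) (h1 : c + 1 ≤ x) (h2 : x ≤ c + a) :
    ((natCycle (c + 1) a) ^ m) x = (x - (c + 1) + m) % a + (c + 1) := by
  have hx : x = (x - (c + 1)) + (c + 1) := by omega
  calc ((natCycle (c+1) a) ^ m) x = ((natCycle (c+1) a) ^ m) ((x - (c+1)) + (c+1)) := by
        rw [← hx]
    _ = (x - (c+1) + m) % a + (c+1) := natCycle_pow_apply (c+1) a m (x - (c+1)) (by omega)

lemma stab_lemma (a b c n : ℕ) (ha : 2 ≤ a) (hb1 : 1 ≤ b) (hba : b < a)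
    (hc : a = b + c) (hn : n = a + c)
    (α β : Equiv.Perm ℕ) (hα : α = natCycle 1 a) (hβ : β = natCycle (c + 1) a) :
    ∀ u, 1 ≤ u → u < n →
      ∃ π ∈ Subgroup.closure ({α, β} : Set (Equiv.Perm ℕ)), π n = n ∧ π u = 1 := by
  have hc1 : 1 ≤ c := by omega
  have hαm : α ∈ Subgroup.closure ({α, β} : Set (Equiv.Perm ℕ)) :=
    Subgroup.subset_closure (by simp)
  have hβm : β ∈ Subgroup.closure ({α, β} : Set (Equiv.Perm ℕ)) :=
    Subgroup.subset_closure (by simp)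
  intro u hu1 hun
  by_cases hu : u ≤ a
  · refine ⟨α ^ (a - u + 1), pow_mem hαm _, ?_, ?_⟩
    · rw [hα]; exact natCycle_pow_fix _ _ _ _ (Or.inr (by omega))
    · rw [hα, alpha_pow a _ u hu1 hu]
      have h : u - 1 + (a - u + 1) = a := by omega
      rw [h, Nat.mod_self]
  · push_neg at hu
    set k := u - a with hk
    have hk1 : 1 ≤ k := by omega
    have hkc : k ≤ c - 1 := by omega
    refine ⟨β ^ k * (α * β ^ (a - k)),
      mul_mem (pow_mem hβm _) (mul_mem hαm (pow_mem hβm _)), ?_, ?_⟩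
    · have e1 : (β ^ (a - k)) n = n - k := by
        rw [hβ, beta_pow c a _ n (by omega) (by omega)]
        have h : n - (c + 1) + (a - k) = a + (a - 1 - k) := by omega
        rw [h, Nat.add_mod_left, Nat.mod_eq_of_lt (by omega)]
        omega
      have e2 : α (n - k) = n - k := by
        rw [hα]
        have := natCycle_pow_fix 1 a 1 (n - k) (Or.inr (by omega))
        simpa using this
      have e3 : (β ^ k) (n - k) = n := by
        rw [hβ, beta_pow c a _ (n - k) (by omega) (by omega)]
        have h : n - k - (c + 1) + k = a - 1 := by omega
        rw [h, Nat.mod_eq_of_lt (by omega)]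
        omega
      rw [Equiv.Perm.mul_apply, Equiv.Perm.mul_apply, e1, e2, e3]
    · have f1 : (β ^ (a - k)) u = a := by
        rw [hβ, beta_pow c a _ u (by omega) (by omega)]
        have h : u - (c + 1) + (a - k) = a + (b - 1) := by omega
        rw [h, Nat.add_mod_left, Nat.mod_eq_of_lt (by omega)]
        omega
      have f2 : α a = 1 := by
        rw [hα]
        have := alpha_pow a 1 a (by omega) (by omega)
        rw [pow_one] at this
        rw [this]
        have h : a - 1 + 1 = a := by omega
        rw [h, Nat.mod_self]
      have f3 : (β ^ k) 1 = 1 := by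
        rw [hβ]; exact natCycle_pow_fix _ _ _ _ (Or.inl (by omega))
      rw [Equiv.Perm.mul_apply, Equiv.Perm.mul_apply, f1, f2, f3]

lemma pair_lemma (a b c n : ℕ) (ha : 2 ≤ a) (hb1 : 1 ≤ b) (hba : b < a)
    (hc : a = b + c) (hn : n = a + c)
    (α β : Equiv.Perm ℕ) (hα : α = natCycle 1 a) (hβ : β = natCycle (c + 1) a) :
    ∀ x y, 1 ≤ x → x ≤ n → 1 ≤ y → y ≤ n → x ≠ y →
      ∃ σ ∈ Subgroup.closure ({α, β} : Set (Equiv.Perm ℕ)), σ x = 1 ∧ σ y = n := by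
  have hc1 : 1 ≤ c := by omega
  have ha0 : 0 < a := by omega
  have hαm : α ∈ Subgroup.closure ({α, β} : Set (Equiv.Perm ℕ)) :=
    Subgroup.subset_closure (by simp)
  have hβm : β ∈ Subgroup.closure ({α, β} : Set (Equiv.Perm ℕ)) :=
    Subgroup.subset_closure (by simp)
  intro x y hx1 hxn hy1 hyn hxy
  obtain ⟨ρ, hρm, hρy, hρx⟩ :
      ∃ ρ ∈ Subgroup.closure ({α, β} : Set (Equiv.Perm ℕ)),
        ρ y = n ∧ (1 ≤ ρ x ∧ ρ x ≤ n) := by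
    by_cases hy : y ≤ a
    · refine ⟨β ^ c * α ^ (a - y), mul_mem (pow_mem hβm _) (pow_mem hαm _), ?_, ?_⟩
      · have g1 : (α ^ (a - y)) y = a := by
          rw [hα, alpha_pow a _ y hy1 hy]
          have h : y - 1 + (a - y) = a - 1 := by omega
          rw [h, Nat.mod_eq_of_lt (by omega)]
          omega
        have g2 : (β ^ c) a = n := by
          rw [hβ, beta_pow c a c a (by omega) (by omega)]
          have h : a - (c + 1) + c = a - 1 := by omega
          rw [h, Nat.mod_eq_of_lt (by omega)]
          omega
        rw [Equiv.Perm.mul_apply, g1, g2]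
      · have hmid : 1 ≤ (α ^ (a - y)) x ∧ (α ^ (a - y)) x ≤ n := by
          by_cases hxa : x ≤ a
          · rw [hα, alpha_pow a _ x hx1 hxa]
            have := Nat.mod_lt (x - 1 + (a - y)) ha0
            omega
          · rw [hα, natCycle_pow_fix _ _ _ _ (Or.inr (by omega))]
            omega
        rw [Equiv.Perm.mul_apply]
        set t := (α ^ (a - y)) x with ht
        by_cases htc : t ≤ c
        · rw [hβ, natCycle_pow_fix _ _ _ _ (Or.inl (by omega))]
          omega
        · rw [hβ, beta_pow c a c t (by omega) (by omega)]
          have := Nat.mod_lt (t - (c + 1) + c) ha0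
          omega
    · push_neg at hy
      refine ⟨β ^ (n - y), pow_mem hβm _, ?_, ?_⟩
      · rw [hβ, beta_pow c a _ y (by omega) (by omega)]
        have h : y - (c + 1) + (n - y) = a - 1 := by omega
        rw [h, Nat.mod_eq_of_lt (by omega)]
        omega
      · by_cases hxc : x ≤ c
        · rw [hβ, natCycle_pow_fix _ _ _ _ (Or.inl (by omega))]
          omega
        · rw [hβ, beta_pow c a _ x (by omega) (by omega)]
          have := Nat.mod_lt (x - (c + 1) + (n - y)) ha0
          omega
  have hρxn : ρ x ≠ n := fun h => hxy (ρ.injective (by rw [h, ← hρy]))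
  obtain ⟨π, hπm, hπn, hπ1⟩ :=
    stab_lemma a b c n ha hb1 hba hc hn α β hα hβ (ρ x) hρx.1 (by omega)
  exact ⟨π * ρ, mul_mem hπm hρm,
    by rw [Equiv.Perm.mul_apply, hπ1],
    by rw [Equiv.Perm.mul_apply, hρy, hπn]⟩

theorem two_transitive_of_two_cycles (a b n : ℕ) (ha : 2 ≤ a) (hb1 : 1 ≤ b) (hba : b < a)
    (hn : n = 2 * a - b)
    (α β : Equiv.Perm ℕ) (hα : α = natCycle 1 a) (hβ : β = natCycle (a - b + 1) a) :
    ∀ x y w z : ℕ, 1 ≤ x → x ≤ n → 1 ≤ y → y ≤ n → 1 ≤ w → w ≤ n → 1 ≤ z → z ≤ n →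
      x ≠ y → w ≠ z →
      ∃ π ∈ Subgroup.closure ({α, β} : Set (Equiv.Perm ℕ)), π x = w ∧ π y = z := by
  intro x y w z hx1 hxn hy1 hyn hw1 hwn hz1 hzn hxy hwz
  set c := a - b with hcdef
  have hc : a = b + c := by omega
  have hn' : n = a + c := by omega
  have hβ' : β = natCycle (c + 1) a := hβ
  obtain ⟨σ, hσm, hσx, hσy⟩ :=
    pair_lemma a b c n ha hb1 hba hc hn' α β hα hβ' x y hx1 hxn hy1 hyn hxy
  obtain ⟨τ, hτm, hτw, hτz⟩ :=
    pair_lemma a b c n ha hb1 hba hc hn' α β hα hβ' w z hw1 hwn hz1 hzn hwz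
  refine ⟨τ⁻¹ * σ, mul_mem (inv_mem hτm) hσm, ?_, ?_⟩
  · rw [Equiv.Perm.mul_apply, hσx, ← hτw, Equiv.Perm.inv_def, Equiv.symm_apply_apply]
  · rw [Equiv.Perm.mul_apply, hσy, ← hτz, Equiv.Perm.inv_def, Equiv.symm_apply_apply]
end

section
/- Let a ≥ 0 and b ≥ 1, and set n = 4a+2b+2. Let α be the cycle (1,…,2a+b+1, 3a+b+2,…,3a+2b+1) and β the cycle (a+1,…,a+b, 2a+b+2,…,4a+2b+2) on {1,…,n}. Then the group generated by α and β acts 2-transitively on {1,2,…,n}. -/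
open Equiv List

namespace TwoTransAux

def lA (a b : ℕ) : List ℕ :=
  (List.range (2 * a + b + 1)).map (· + 1) ++ (List.range b).map (· + (3 * a + b + 2))

def lB (a b : ℕ) : List ℕ :=
  (List.range b).map (· + (a + 1)) ++ (List.range (2 * a + b + 1)).map (· + (2 * a + b + 2))

def fA (a b k : ℕ) : ℕ := if k < 2 * a + b + 1 then k + 1 else k + a + 1

def fB (a b k : ℕ) : ℕ := if k < b then a + 1 + k else k + 2 * a + 2

lemma length_lA (a b : ℕ) : (lA a b).length = 2 * a + 2 * b + 1 := by
  simp [lA]; ring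

lemma length_lB (a b : ℕ) : (lB a b).length = 2 * a + 2 * b + 1 := by
  simp [lB]; ring

lemma mem_lA {a b x : ℕ} :
    x ∈ lA a b ↔ (1 ≤ x ∧ x ≤ 2 * a + b + 1) ∨ (3 * a + b + 2 ≤ x ∧ x ≤ 3 * a + 2 * b + 1) := by
  simp only [lA, List.mem_append, List.mem_map, List.mem_range]
  constructor
  · rintro (⟨k, hk, rfl⟩ | ⟨k, hk, rfl⟩) <;> omega
  · rintro (⟨h1, h2⟩ | ⟨h1, h2⟩)
    · exact Or.inl ⟨x - 1, by omega⟩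
    · exact Or.inr ⟨x - (3 * a + b + 2), by omega⟩

lemma mem_lB {a b x : ℕ} :
    x ∈ lB a b ↔ (a + 1 ≤ x ∧ x ≤ a + b) ∨ (2 * a + b + 2 ≤ x ∧ x ≤ 4 * a + 2 * b + 2) := by
  simp only [lB, List.mem_append, List.mem_map, List.mem_range]
  constructor
  · rintro (⟨k, hk, rfl⟩ | ⟨k, hk, rfl⟩) <;> omega
  · rintro (⟨h1, h2⟩ | ⟨h1, h2⟩)
    · exact Or.inl ⟨x - (a + 1), by omega⟩
    · exact Or.inr ⟨x - (2 * a + b + 2), by omega⟩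

lemma nodup_lA (a b : ℕ) : (lA a b).Nodup := by
  refine List.Nodup.append ?_ ?_ ?_
  · exact List.nodup_range.map (fun i j h => by omega)
  · exact List.nodup_range.map (fun i j h => by omega)
  · intro x hx hy
    simp only [List.mem_map, List.mem_range] at hx hy
    obtain ⟨k, hk, rfl⟩ := hx
    obtain ⟨j, hj, hje⟩ := hy
    omega

lemma nodup_lB (a b : ℕ) : (lB a b).Nodup := by
  refine List.Nodup.append ?_ ?_ ?_
  · exact List.nodup_range.map (fun i j h => by omega)
  · exact List.nodup_range.map (fun i j h => by omega)
  · intro x hx hy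
    simp only [List.mem_map, List.mem_range] at hx hy
    obtain ⟨k, hk, rfl⟩ := hx
    obtain ⟨j, hj, hje⟩ := hy
    omega

lemma getElem_lA (a b k : ℕ) (hk : k < (lA a b).length) : (lA a b)[k] = fA a b k := by
  rw [length_lA] at hk
  rcases lt_or_ge k (2 * a + b + 1) with h | h
  · simp only [lA]
    rw [List.getElem_append_left (by simpa using h)]
    simp only [List.getElem_map, List.getElem_range]
    unfold fA
    rw [if_pos h]
  · simp only [lA]
    rw [List.getElem_append_right (by simpa using h)]
    simp only [List.getElem_map, List.getElem_range, fA]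
    rw [if_neg (by omega)]
    simp only [List.length_map, List.length_range]
    omega

lemma getElem_lB (a b k : ℕ) (hk : k < (lB a b).length) : (lB a b)[k] = fB a b k := by
  rw [length_lB] at hk
  rcases lt_or_ge k b with h | h
  · simp only [lB]
    rw [List.getElem_append_left (by simpa using h)]
    simp only [List.getElem_map, List.getElem_range]
    unfold fB
    rw [if_pos h]
    omega
  · simp only [lB]
    rw [List.getElem_append_right (by simpa using h)]
    simp only [List.getElem_map, List.getElem_range, fB]
    rw [if_neg (by omega)]
    simp only [List.length_map, List.length_range]
    omega

lemma powA (a b s k : ℕ) (hk : k < 2 * a + 2 * b + 1) :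
    ((lA a b).formPerm ^ s) (fA a b k) = fA a b ((k + s) % (2 * a + 2 * b + 1)) := by
  have hk' : k < (lA a b).length := by rw [length_lA]; exact hk
  have h := List.formPerm_pow_apply_getElem (lA a b) (nodup_lA a b) s k hk'
  rw [getElem_lA a b k hk', getElem_lA] at h
  rwa [length_lA] at h

lemma powB (a b s k : ℕ) (hk : k < 2 * a + 2 * b + 1) :
    ((lB a b).formPerm ^ s) (fB a b k) = fB a b ((k + s) % (2 * a + 2 * b + 1)) := by
  have hk' : k < (lB a b).length := by rw [length_lB]; exact hk
  have h := List.formPerm_pow_apply_getElem (lB a b) (nodup_lB a b) s k hk'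
  rw [getElem_lB a b k hk', getElem_lB] at h
  rwa [length_lB] at h

lemma pow_fix {l : List ℕ} {x : ℕ} (hx : x ∉ l) (s : ℕ) : (l.formPerm ^ s) x = x := by
  induction s with
  | zero => rfl
  | succ t ih =>
    rw [pow_succ, Equiv.Perm.mul_apply, List.formPerm_apply_of_notMem hx, ih]

end TwoTransAux

open TwoTransAux

section Main

variable {a b : ℕ}

def Gp (a b : ℕ) : Subgroup (Equiv.Perm ℕ) :=
  Subgroup.closure ({(lA a b).formPerm, (lB a b).formPerm} : Set (Equiv.Perm ℕ))

lemma memA : (lA a b).formPerm ∈ Gp a b := Subgroup.subset_closure (Set.mem_insert _ _)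

lemma memB : (lB a b).formPerm ∈ Gp a b :=
  Subgroup.subset_closure (Set.mem_insert_of_mem _ rfl)

/-- Shortcut appliers. -/
lemma mod_red {L t r : ℕ} (hr : r < L) (h : t = r ∨ t = L + r) : t % L = r := by
  rcases h with rfl | rfl
  · exact Nat.mod_eq_of_lt hr
  · rw [Nat.add_mod_left]; exact Nat.mod_eq_of_lt hr

lemma applyA (a b s u v k r : ℕ) (hk : k < 2 * a + 2 * b + 1) (hr : r < 2 * a + 2 * b + 1)
    (hkr : k + s = r ∨ k + s = 2 * a + 2 * b + 1 + r)
    (hu : fA a b k = u) (hv : fA a b r = v) :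
    ((lA a b).formPerm ^ s) u = v := by
  rw [← hu, powA a b s k hk, mod_red hr hkr, hv]

lemma applyB (a b s u v k r : ℕ) (hk : k < 2 * a + 2 * b + 1) (hr : r < 2 * a + 2 * b + 1)
    (hkr : k + s = r ∨ k + s = 2 * a + 2 * b + 1 + r)
    (hu : fB a b k = u) (hv : fB a b r = v) :
    ((lB a b).formPerm ^ s) u = v := by
  rw [← hu, powB a b s k hk, mod_red hr hkr, hv]

/-- Every point of [1,n] can be sent to n. -/
lemma reach_top (hb : 1 ≤ b) (x : ℕ) (h1 : 1 ≤ x) (h2 : x ≤ 4 * a + 2 * b + 2) :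
    ∃ π ∈ Gp a b, π x = 4 * a + 2 * b + 2 := by
  by_cases hx : x ∈ lB a b
  · have hmem := mem_lB.1 hx
    obtain ⟨k, hk, hkx⟩ : ∃ k, k < 2 * a + 2 * b + 1 ∧ fB a b k = x := by
      refine ⟨if x ≤ a + b then x - a - 1 else x - 2 * a - 2, ?_, ?_⟩
      · split_ifs <;> omega
      · unfold fB; split_ifs <;> omega
    exact ⟨(lB a b).formPerm ^ (2 * a + 2 * b - k), Subgroup.pow_mem _ memB _,
      applyB a b _ x _ k (2 * a + 2 * b) hk (by omega) (by omega) hkx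
        (by unfold fB; split_ifs <;> omega)⟩
  · have hmem := fun h => hx (mem_lB.2 h)
    have hx' : (1 ≤ x ∧ x ≤ a) ∨ (a + b + 1 ≤ x ∧ x ≤ 2 * a + b + 1) := by
      by_contra hcon
      exact hmem (by omega)
    have e1 : ((lA a b).formPerm ^ (2 * a + 2 * b + 2 + a - x)) x = a + 1 :=
      applyA a b _ x _ (x - 1) a (by omega) (by omega) (by omega)
        (by unfold fA; split_ifs <;> omega) (by unfold fA; split_ifs <;> omega)
    have e2 : ((lB a b).formPerm ^ (2 * a + 2 * b)) (a + 1) = 4 * a + 2 * b + 2 :=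
      applyB a b _ _ _ 0 (2 * a + 2 * b) (by omega) (by omega) (by omega)
        (by unfold fB; split_ifs <;> omega) (by unfold fB; split_ifs <;> omega)
    exact ⟨(lB a b).formPerm ^ (2 * a + 2 * b) * (lA a b).formPerm ^ (2 * a + 2 * b + 2 + a - x),
      Subgroup.mul_mem _ (Subgroup.pow_mem _ memB _) (Subgroup.pow_mem _ memA _),
      by rw [Equiv.Perm.mul_apply, e1, e2]⟩

/-- The stabilizer of n sends every other point of [1,n] to 1. -/
lemma stab_top (hb : 1 ≤ b) (y : ℕ) (h1 : 1 ≤ y) (h2 : y ≤ 4 * a + 2 * b + 2)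
    (h3 : y ≠ 4 * a + 2 * b + 2) :
    ∃ π ∈ Gp a b, π (4 * a + 2 * b + 2) = 4 * a + 2 * b + 2 ∧ π y = 1 := by
  have hnA : (4 * a + 2 * b + 2 : ℕ) ∉ lA a b := fun h => by
    have := mem_lA.1 h; omega
  by_cases hy : y ∈ lA a b
  · have hmem := mem_lA.1 hy
    obtain ⟨k, hk, hky⟩ : ∃ k, k < 2 * a + 2 * b + 1 ∧ fA a b k = y := by
      refine ⟨if y ≤ 2 * a + b + 1 then y - 1 else y - a - 1, ?_, ?_⟩
      · split_ifs <;> omega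
      · unfold fA; split_ifs <;> omega
    exact ⟨(lA a b).formPerm ^ (2 * a + 2 * b + 1 - k), Subgroup.pow_mem _ memA _,
      pow_fix hnA _,
      applyA a b _ y 1 k 0 hk (by omega) (by omega) hky
        (by unfold fA; split_ifs <;> omega)⟩
  · have hmem := fun h => hy (mem_lA.2 h)
    have hy' : (2 * a + b + 2 ≤ y ∧ y ≤ 3 * a + b + 1) ∨
        (3 * a + 2 * b + 2 ≤ y ∧ y ≤ 4 * a + 2 * b + 1) := by
      by_contra hcon
      exact hmem (by omega)
    have ha : 1 ≤ a := by omega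
    set j : ℕ := 4 * a + 3 * b + 2 - y with hj
    have hj1 : b + 1 ≤ j := by omega
    have hj2 : j ≤ 2 * a + 2 * b := by omega
    have e1 : ((lB a b).formPerm ^ j) y = a + b :=
      applyB a b _ _ _ (y - 2 * a - 2) (b - 1) (by omega) (by omega) (by omega)
        (by unfold fB; split_ifs <;> omega) (by unfold fB; split_ifs <;> omega)
    have e2 : ((lA a b).formPerm ^ (a + b + 2)) (a + b) = 1 :=
      applyA a b _ _ _ (a + b - 1) 0 (by omega) (by omega) (by omega)
        (by unfold fA; split_ifs <;> omega) (by unfold fA; split_ifs <;> omega)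
    have h1B : (1 : ℕ) ∉ lB a b := fun h => by
      have := mem_lB.1 h; omega
    have e3 : ((lB a b).formPerm ^ (2 * a + 2 * b + 1 - j)) 1 = 1 := pow_fix h1B _
    have e4 : ((lB a b).formPerm ^ j) (4 * a + 2 * b + 2) = j + 2 * a + 1 :=
      applyB a b _ _ _ (2 * a + 2 * b) (j - 1) (by omega) (by omega) (by omega)
        (by unfold fB; split_ifs <;> omega) (by unfold fB; split_ifs <;> omega)
    have hvA : (j + 2 * a + 1 : ℕ) ∉ lA a b := fun h => by
      have := mem_lA.1 h; omega
    have e5 : ((lA a b).formPerm ^ (a + b + 2)) (j + 2 * a + 1) = j + 2 * a + 1 := pow_fix hvA _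
    have e6 : ((lB a b).formPerm ^ (2 * a + 2 * b + 1 - j)) (j + 2 * a + 1) = 4 * a + 2 * b + 2 :=
      applyB a b _ _ _ (j - 1) (2 * a + 2 * b) (by omega) (by omega) (by omega)
        (by unfold fB; split_ifs <;> omega) (by unfold fB; split_ifs <;> omega)
    refine ⟨(lB a b).formPerm ^ (2 * a + 2 * b + 1 - j) *
      ((lA a b).formPerm ^ (a + b + 2) * (lB a b).formPerm ^ j),
      Subgroup.mul_mem _ (Subgroup.pow_mem _ memB _)
        (Subgroup.mul_mem _ (Subgroup.pow_mem _ memA _) (Subgroup.pow_mem _ memB _)), ?_, ?_⟩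
    · rw [Equiv.Perm.mul_apply, Equiv.Perm.mul_apply, e4, e5, e6]
    · rw [Equiv.Perm.mul_apply, Equiv.Perm.mul_apply, e1, e2, e3]

/-- Elements of the closure preserve the interval [1, n]. -/
lemma preserve (π : Equiv.Perm ℕ) (hπ : π ∈ Gp a b) (u : ℕ) (h1 : 1 ≤ u)
    (h2 : u ≤ 4 * a + 2 * b + 2) : 1 ≤ π u ∧ π u ≤ 4 * a + 2 * b + 2 := by
  set n := 4 * a + 2 * b + 2 with hn
  have key : ∀ (l : List ℕ), (∀ x ∈ l, 1 ≤ x ∧ x ≤ n) → ∀ v, 1 ≤ v → v ≤ n →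
      (1 ≤ l.formPerm v ∧ l.formPerm v ≤ n) ∧
      (1 ≤ l.formPerm⁻¹ v ∧ l.formPerm⁻¹ v ≤ n) := by
    intro l hl v hv1 hv2
    constructor
    · by_cases hm : v ∈ l
      · exact hl _ (List.formPerm_apply_mem_of_mem hm)
      · rw [List.formPerm_apply_of_notMem hm]; exact ⟨hv1, hv2⟩
    · by_cases hm : l.formPerm⁻¹ v ∈ l
      · exact hl _ hm
      · have := List.formPerm_apply_of_notMem hm
        rw [show ∀ (f : Equiv.Perm ℕ) (x : ℕ), f (f⁻¹ x) = x from fun f x => by simp] at this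
        exact ⟨this ▸ hv1, this ▸ hv2⟩
  have hlA : ∀ x ∈ lA a b, 1 ≤ x ∧ x ≤ n := by
    intro x hx; have := mem_lA.1 hx; omega
  have hlB : ∀ x ∈ lB a b, 1 ≤ x ∧ x ≤ n := by
    intro x hx; have := mem_lB.1 hx; omega
  have main : ∀ v, 1 ≤ v → v ≤ n → (1 ≤ π v ∧ π v ≤ n) ∧ (1 ≤ π⁻¹ v ∧ π⁻¹ v ≤ n) := by
    refine Subgroup.closure_induction
      (p := fun g _ => ∀ v, 1 ≤ v → v ≤ n → (1 ≤ g v ∧ g v ≤ n) ∧ (1 ≤ g⁻¹ v ∧ g⁻¹ v ≤ n))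
      ?_ ?_ ?_ ?_ hπ
    · rintro x (rfl | rfl) v hv1 hv2
      · exact key _ hlA v hv1 hv2
      · exact key _ hlB v hv1 hv2
    · intro v hv1 hv2; simp [hv1, hv2]
    · intro g h _ _ hg hh v hv1 hv2
      constructor
      · have := hh v hv1 hv2
        have := hg (h v) this.1.1 this.1.2
        simpa [Equiv.Perm.mul_apply] using this.1
      · have := hg v hv1 hv2
        have := hh (g⁻¹ v) this.2.1 this.2.2
        simpa [Equiv.Perm.mul_apply] using this.2
    · intro g _ hg v hv1 hv2
      have := hg v hv1 hv2
      exact ⟨this.2, by simpa using this.1⟩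
  exact (main u h1 h2).1

/-- Combined: map any pair (x,y) with x ≠ y to (n, 1). -/
lemma pair_to_canon (hb : 1 ≤ b) (x y : ℕ) (hx1 : 1 ≤ x) (hx2 : x ≤ 4 * a + 2 * b + 2)
    (hy1 : 1 ≤ y) (hy2 : y ≤ 4 * a + 2 * b + 2) (hxy : x ≠ y) :
    ∃ π ∈ Gp a b, π x = 4 * a + 2 * b + 2 ∧ π y = 1 := by
  obtain ⟨σ, hσ, hσx⟩ := reach_top (a := a) hb x hx1 hx2
  have hyb := preserve σ hσ y hy1 hy2
  have hyn : σ y ≠ 4 * a + 2 * b + 2 := by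
    rw [← hσx]
    intro h
    exact hxy (σ.injective h).symm
  obtain ⟨τ, hτ, hτn, hτy⟩ := stab_top (a := a) hb (σ y) hyb.1 hyb.2 hyn
  exact ⟨τ * σ, Subgroup.mul_mem _ hτ hσ, by rw [Equiv.Perm.mul_apply, hσx, hτn],
    by rw [Equiv.Perm.mul_apply, hτy]⟩

end Main

theorem two_transitive_of_two_cycles' (a b n : ℕ) (hb : 1 ≤ b) (hn : n = 4 * a + 2 * b + 2)
    (α β : Equiv.Perm ℕ)
    (hα : α = List.formPerm
      ((List.range (2 * a + b + 1)).map (· + 1) ++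
        (List.range b).map (· + (3 * a + b + 2))))
    (hβ : β = List.formPerm
      ((List.range b).map (· + (a + 1)) ++
        (List.range (2 * a + b + 1)).map (· + (2 * a + b + 2)))) :
    ∀ x y w z : ℕ, 1 ≤ x → x ≤ n → 1 ≤ y → y ≤ n → 1 ≤ w → w ≤ n → 1 ≤ z → z ≤ n →
      x ≠ y → w ≠ z →
      ∃ π ∈ Subgroup.closure ({α, β} : Set (Equiv.Perm ℕ)), π x = w ∧ π y = z := by
  intro x y w z hx1 hx2 hy1 hy2 hw1 hw2 hz1 hz2 hxy hwz
  have hα' : α = (lA a b).formPerm := hα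
  have hβ' : β = (lB a b).formPerm := hβ
  subst hα' hβ' hn
  obtain ⟨σ, hσ, hσx, hσy⟩ := pair_to_canon (a := a) (b := b) hb x y hx1 hx2 hy1 hy2 hxy
  obtain ⟨τ, hτ, hτw, hτz⟩ := pair_to_canon (a := a) (b := b) hb w z hw1 hw2 hz1 hz2 hwz
  refine ⟨τ⁻¹ * σ, Subgroup.mul_mem _ (Subgroup.inv_mem _ hτ) hσ, ?_, ?_⟩
  · rw [Equiv.Perm.mul_apply, hσx, ← hτw, show ∀ (f : Equiv.Perm ℕ) (x : ℕ), f⁻¹ (f x) = x from fun f x => by simp]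
  · rw [Equiv.Perm.mul_apply, hσy, ← hτz, show ∀ (f : Equiv.Perm ℕ) (x : ℕ), f⁻¹ (f x) = x from fun f x => by simp]
end

section
/- Let A and B be finite sets with A ∩ B ≠ ∅ and A \ B ≠ ∅. Let G be a group of permutations of A ∪ B whose restriction to A is 2-transitive (every element of G maps A to A), whose elements fix every point of B \ A, and let β be a cycle whose support is exactly B. Then the permutation group generated by G ∪ {β} acts 2-transitively on A ∪ B. -/
open Equiv Finset

theorem two_transitive_extension {α : Type*} [Fintype α] [DecidableEq α]
    (A B : Finset α) (hAB : (A ∩ B).Nonempty) (hAnB : (A \ B).Nonempty)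
    (G : Subgroup (Equiv.Perm α))
    (hfix : ∀ g ∈ G, ∀ x : α, x ∉ A ∪ B → g x = x)
    (hGA : ∀ g ∈ G, ∀ x ∈ A, g x ∈ A)
    (h2A : ∀ x ∈ A, ∀ y ∈ A, ∀ w ∈ A, ∀ z ∈ A, x ≠ y → w ≠ z →
      ∃ g ∈ G, g x = w ∧ g y = z)
    (hBA : ∀ g ∈ G, ∀ x ∈ B \ A, g x = x)
    (β : Equiv.Perm α) (hβ : β.IsCycle) (hβsupp : β.support = B) :
    ∀ x ∈ A ∪ B, ∀ y ∈ A ∪ B, ∀ w ∈ A ∪ B, ∀ z ∈ A ∪ B, x ≠ y → w ≠ z →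
      ∃ π ∈ Subgroup.closure (insert β (G : Set (Equiv.Perm α))),
        π x = w ∧ π y = z := by
  classical
  intro x hx y hy w hw z hz hxy hwz
  set H := Subgroup.closure (insert β (G : Set (Equiv.Perm α))) with hH
  have hβH : β ∈ H := Subgroup.subset_closure (Set.mem_insert _ _)
  have hGH : ∀ g ∈ G, g ∈ H := fun g hg =>
    Subgroup.subset_closure (Set.mem_insert_of_mem _ hg)
  obtain ⟨c, hc⟩ := hAB
  obtain ⟨a, ha⟩ := hAnB
  have hcA : c ∈ A := (Finset.mem_inter.mp hc).1
  have hcB : c ∈ B := (Finset.mem_inter.mp hc).2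
  have haA : a ∈ A := (Finset.mem_sdiff.mp ha).1
  have haB : a ∉ B := (Finset.mem_sdiff.mp ha).2
  have hac : a ≠ c := fun h => haB (h ▸ hcB)
  have hzfix : ∀ (k : ℤ) (t : α), t ∉ B → (β ^ k) t = t := by
    intro k t ht
    have : t ∉ (β ^ k).support := fun h =>
      ht (hβsupp ▸ Equiv.Perm.support_zpow_le β k h)
    exact Equiv.Perm.notMem_support.mp this
  have htransA : ∀ u ∈ A, ∃ g ∈ G, g u = a := by
    intro u hu
    by_cases h : u = a
    · exact ⟨1, G.one_mem, by simp [h]⟩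
    · obtain ⟨g, hg, hg1, _⟩ := h2A u hu a haA a haA c hcA h hac
      exact ⟨g, hg, hg1⟩
  have case1 : ∀ u ∈ A, ∀ v ∈ B, v ∉ A → ∃ π ∈ H, π u ∈ A ∧ π v ∈ A := by
    intro u hu v hvB hvA
    obtain ⟨g, hg, hgu⟩ := htransA u hu
    have hgv : g v = v := hBA g hg v (Finset.mem_sdiff.mpr ⟨hvB, hvA⟩)
    have hvc : β.SameCycle v c :=
      hβ.sameCycle (Equiv.Perm.mem_support.mp (hβsupp ▸ hvB))
        (Equiv.Perm.mem_support.mp (hβsupp ▸ hcB))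
    obtain ⟨k, hk⟩ := hvc
    refine ⟨β ^ k * g, H.mul_mem (H.zpow_mem hβH k) (hGH g hg), ?_, ?_⟩
    · have : (β ^ k * g) u = a := by
        simp [Equiv.Perm.mul_apply, hgu, hzfix k a haB]
      rw [this]; exact haA
    · have : (β ^ k * g) v = c := by
        simp [Equiv.Perm.mul_apply, hgv, hk]
      rw [this]; exact hcA
  have key : ∀ u ∈ A ∪ B, ∀ v ∈ A ∪ B, u ≠ v →
      ∃ π ∈ H, π u ∈ A ∧ π v ∈ A := by
    intro u hu v hv huv
    by_cases huA : u ∈ A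
    · by_cases hvA : v ∈ A
      · exact ⟨1, H.one_mem, by simpa, by simpa⟩
      · have hvB : v ∈ B := (Finset.mem_union.mp hv).resolve_left hvA
        exact case1 u huA v hvB hvA
    · have huB : u ∈ B := (Finset.mem_union.mp hu).resolve_left huA
      by_cases hvA : v ∈ A
      · obtain ⟨π, hπ, h1, h2⟩ := case1 v hvA u huB huA
        exact ⟨π, hπ, h2, h1⟩
      · have hvB : v ∈ B := (Finset.mem_union.mp hv).resolve_left hvA
        have huc : β.SameCycle u c :=
          hβ.sameCycle (Equiv.Perm.mem_support.mp (hβsupp ▸ huB))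
            (Equiv.Perm.mem_support.mp (hβsupp ▸ hcB))
        obtain ⟨k, hk⟩ := huc
        have hkuA : (β ^ k) u ∈ A := by rw [hk]; exact hcA
        have hvB' : (β ^ k) v ∈ B := by
          have h1 : v ∈ β.support := by rw [hβsupp]; exact hvB
          have := (Equiv.Perm.zpow_apply_mem_support (f := β) (n := k) (x := v)).mpr h1
          rw [hβsupp] at this; exact this
        by_cases hvA' : (β ^ k) v ∈ A
        · exact ⟨β ^ k, H.zpow_mem hβH k, hkuA, hvA'⟩
        · obtain ⟨π, hπ, h1, h2⟩ := case1 ((β ^ k) u) hkuA ((β ^ k) v) hvB' hvA'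
          exact ⟨π * β ^ k, H.mul_mem hπ (H.zpow_mem hβH k), h1, h2⟩
  obtain ⟨π₁, hπ₁, hx1, hy1⟩ := key x hx y hy hxy
  obtain ⟨π₂, hπ₂, hw2, hz2⟩ := key w hw z hz hwz
  have hne1 : π₁ x ≠ π₁ y := fun h => hxy (π₁.injective h)
  have hne2 : π₂ w ≠ π₂ z := fun h => hwz (π₂.injective h)
  obtain ⟨g, hg, hg1, hg2⟩ := h2A (π₁ x) hx1 (π₁ y) hy1 (π₂ w) hw2 (π₂ z) hz2 hne1 hne2
  refine ⟨π₂⁻¹ * g * π₁, H.mul_mem (H.mul_mem (H.inv_mem hπ₂) (hGH g hg)) hπ₁, ?_, ?_⟩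
  · simp [Equiv.Perm.mul_apply, hg1]
  · simp [Equiv.Perm.mul_apply, hg2]
end

section
/- Let σ be an n-cycle (c₁ c₂ … c_n) on a set of n elements with n odd, and let τ = (c_i c_{i+1} c_{i+2}) be a 3-cycle on three consecutive elements of σ. Then σ and τ generate the alternating group on those n elements. -/
open Equiv

/-- An `n`-cycle `σ` on a set of `n` elements (`n` odd) together with a 3-cycle
on three consecutive elements of `σ` generates the alternating group. -/
theorem cycle_and_consecutive_three_cycle_generate_alternating
    {α : Type*} [Fintype α] [DecidableEq α]
    (hodd : Odd (Fintype.card α))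
    (σ τ : Equiv.Perm α) (hσ : σ.IsCycle) (hσsupp : σ.support = Finset.univ)
    (hτ : τ.IsThreeCycle) (hcons : ∃ x : α, τ = List.formPerm [x, σ x, σ (σ x)]) :
    Subgroup.closure ({σ, τ} : Set (Equiv.Perm α)) = alternatingGroup α := by
  classical
  obtain ⟨x, hx⟩ := hcons
  set H := Subgroup.closure ({σ, τ} : Set (Equiv.Perm α)) with hH
  have hσH : σ ∈ H := Subgroup.subset_closure (Set.mem_insert σ _)
  have hτH : τ ∈ H := Subgroup.subset_closure (Set.mem_insert_of_mem _ rfl)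
  have hxσ : σ x ≠ x := by
    rw [← Equiv.Perm.mem_support, hσsupp]; exact Finset.mem_univ x
  set s : Equiv.Perm α := Equiv.swap x (σ x) with hs
  set t : Equiv.Perm α := Equiv.swap (σ x) (σ (σ x)) with ht
  have hss : s * s = 1 := Equiv.swap_mul_self _ _
  have hsinv : s⁻¹ = s := Equiv.swap_inv _ _
  have htt : t * t = 1 := Equiv.swap_mul_self _ _
  have hτs : τ = s * t := by
    simp [hx, List.formPerm, hs, ht]
  -- conjugation by `s` on the generators
  have hconjσ : s * σ * s = τ * σ := by
    have h1 : Equiv.swap (σ x) (σ (σ x)) = σ * Equiv.swap x (σ x) * σ⁻¹ :=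
      Equiv.swap_apply_apply σ x (σ x)
    rw [hτs, ht, h1, hs]
    group
  have hconjτ : s * τ * s = τ⁻¹ := by
    have hti : t⁻¹ = t := Equiv.swap_inv _ _
    rw [hτs, mul_inv_rev, hsinv, hti]
    calc s * (s * t) * s = (s * s) * (t * s) := by group
      _ = t * s := by rw [hss, one_mul]
  -- conjugation by `s` preserves `H`
  have hconj : ∀ h ∈ H, s * h * s ∈ H := by
    intro h hh
    induction hh using Subgroup.closure_induction with
    | mem g hg =>
      rcases hg with rfl | hg
      · rw [hconjσ]; exact H.mul_mem hτH hσH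
      · rw [Set.mem_singleton_iff] at hg
        subst hg
        rw [hconjτ]; exact H.inv_mem hτH
    | one => rw [mul_one, hss]; exact H.one_mem
    | mul a b _ _ pa pb =>
      have : s * (a * b) * s = (s * a * s) * (s * b * s) := by
        calc s * (a * b) * s = s * a * (s * s) * b * s := by rw [hss]; group
          _ = (s * a * s) * (s * b * s) := by group
      rw [this]; exact H.mul_mem pa pb
    | inv a _ pa =>
      have : s * a⁻¹ * s = (s * a * s)⁻¹ := by
        rw [mul_inv_rev, mul_inv_rev, hsinv, mul_assoc]
      rw [this]; exact H.inv_mem pa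
  -- every permutation is in `H` or `H * s`
  have hmain : ∀ g : Equiv.Perm α, g ∈ H ∨ g * s ∈ H := by
    intro g
    have hg : g ∈ Subgroup.closure ({σ, s} : Set (Equiv.Perm α)) := by
      rw [Equiv.Perm.closure_cycle_adjacent_swap hσ hσsupp x]; trivial
    induction hg using Subgroup.closure_induction with
    | mem g hg =>
      rcases hg with rfl | hg
      · exact Or.inl hσH
      · rw [Set.mem_singleton_iff] at hg
        subst hg
        right; rw [hss]; exact H.one_mem
    | one => exact Or.inl H.one_mem
    | mul a b _ _ pa pb =>
      rcases pa with pa | pa <;> rcases pb with pb | pb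
      · exact Or.inl (H.mul_mem pa pb)
      · right; rw [mul_assoc]; exact H.mul_mem pa pb
      · right
        have : a * b * s = (a * s) * (s * b * s) := by
          calc a * b * s = a * (s * s) * b * s := by rw [hss]; group
            _ = (a * s) * (s * b * s) := by group
        rw [this]; exact H.mul_mem pa (hconj b pb)
      · left
        have : (a * s) * (s * (b * s) * s) = a * b := by
          calc (a * s) * (s * (b * s) * s) = a * (s * s) * b * (s * s) := by group
            _ = a * b := by rw [hss]; group
        rw [← this]; exact H.mul_mem pa (hconj _ pb)
    | inv a _ pa =>
      rcases pa with pa | pa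
      · exact Or.inl (H.inv_mem pa)
      · right
        have : a⁻¹ * s = s * (a * s)⁻¹ * s := by
          rw [mul_inv_rev, hsinv]
          calc a⁻¹ * s = (s * s) * a⁻¹ * s := by rw [hss]; group
            _ = s * (s * a⁻¹) * s := by group
        rw [this]; exact hconj _ (H.inv_mem pa)
  have hHle : H ≤ alternatingGroup α := by
    rw [hH, Subgroup.closure_le]
    rintro g (rfl | hg)
    · rw [SetLike.mem_coe, Equiv.Perm.mem_alternatingGroup, hσ.sign, hσsupp,
        Finset.card_univ, hodd.neg_one_pow]
      exact neg_neg 1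
    · rw [Set.mem_singleton_iff] at hg
      subst hg
      exact Equiv.Perm.mem_alternatingGroup.mpr hτ.sign
  apply le_antisymm hHle
  intro g hg
  rcases hmain g with h | h
  · exact h
  · exfalso
    have h1 : Equiv.Perm.sign (g * s) = 1 := Equiv.Perm.mem_alternatingGroup.mp (hHle h)
    have h2 : Equiv.Perm.sign (g * s) = -1 := by
      rw [map_mul, Equiv.Perm.mem_alternatingGroup.mp hg, hs,
        Equiv.Perm.sign_swap hxσ.symm, one_mul]
    rw [h1] at h2
    exact absurd h2 (by decide)
end

section
/- Let n = 2a − b with a ≥ 2, 1 ≤ b < a, and let α = (1,…,a), β = (a−b+1,…,2a−b) as cycles on {1,…,n}. Define σ = α⁻¹ β⁻¹ α β² if b = 1 and σ = α⁻¹ β⁻¹ α β if b > 1 (composition left to right). Then σ(a−b) = n and σ(n) = a−b. -/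
open Equiv

lemma natCycle_nodup (s len : ℕ) : ((List.range len).map (· + s)).Nodup :=
  List.nodup_range.map (fun a b h => by omega)

lemma natCycle_fix (s len x : ℕ) (h : x < s ∨ s + len ≤ x) : natCycle s len x = x := by
  apply List.formPerm_apply_of_notMem
  simp only [List.mem_map, List.mem_range]
  rintro ⟨i, hi, rfl⟩; omega

lemma natCycle_mid (s len x : ℕ) (h1 : s ≤ x) (h2 : x + 1 < s + len) :
    natCycle s len x = x + 1 := by
  have hl : x - s < ((List.range len).map (· + s)).length := by simp; omega
  have := List.formPerm_apply_getElem _ (natCycle_nodup s len) (x - s) hl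
  simp only [List.getElem_map, List.getElem_range, List.length_map, List.length_range] at this
  rw [Nat.mod_eq_of_lt (by omega)] at this
  have hx : x - s + s = x := by omega
  rw [hx] at this
  rw [natCycle, this]; omega

lemma natCycle_last (s len : ℕ) (h : 1 ≤ len) : natCycle s len (s + len - 1) = s := by
  have hl : len - 1 < ((List.range len).map (· + s)).length := by simp; omega
  have := List.formPerm_apply_getElem _ (natCycle_nodup s len) (len - 1) hl
  simp only [List.getElem_map, List.getElem_range, List.length_map, List.length_range] at this
  rw [show len - 1 + 1 = len by omega, Nat.mod_self] at this
  rw [natCycle, show s + len - 1 = len - 1 + s by omega, this]; omega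

/-- The swap computation in the 2-transitivity proof: with `α = (1,…,a)`,
`β = (a-b+1,…,2a-b)` and `σ = α⁻¹β⁻¹αβ²` (if `b = 1`) or `σ = α⁻¹β⁻¹αβ`
(if `b > 1`), written as products in the paper's left-to-right order, one has
`σ(a-b) = n` and `σ(n) = a-b`. -/
theorem swap_computation (a b n : ℕ) (ha : 2 ≤ a) (hb1 : 1 ≤ b) (hba : b < a)
    (hn : n = 2 * a - b)
    (α β σ : Equiv.Perm ℕ) (hα : α = natCycle 1 a) (hβ : β = natCycle (a - b + 1) a)
    (hσ : σ = if b = 1 then α⁻¹ * β⁻¹ * α * β ^ 2 else α⁻¹ * β⁻¹ * α * β) :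
    σ (a - b) = n ∧ σ n = a - b := by
  have hinv : ∀ (π : Equiv.Perm ℕ) x y, π x = y → π⁻¹ y = x := by
    rintro π x y rfl; exact Equiv.symm_apply_apply π x
  -- α facts
  have hαmid : ∀ x, 1 ≤ x → x < a → α x = x + 1 := fun x h1 h2 => by
    rw [hα]; exact natCycle_mid _ _ _ h1 (by omega)
  have hαlast : α a = 1 := by
    have := natCycle_last 1 a (by omega)
    rwa [show 1 + a - 1 = a by omega, ← hα] at this
  have hαfix : ∀ x, a < x → α x = x := fun x h => by
    rw [hα]; exact natCycle_fix _ _ _ (by omega)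
  have hβmid : ∀ x, a - b + 1 ≤ x → x < 2 * a - b → β x = x + 1 := fun x h1 h2 => by
    rw [hβ]; exact natCycle_mid _ _ _ h1 (by omega)
  have hβlast : β (2 * a - b) = a - b + 1 := by
    have := natCycle_last (a - b + 1) a (by omega)
    rwa [show a - b + 1 + a - 1 = 2 * a - b by omega, ← hβ] at this
  have hβfix : ∀ x, x < a - b + 1 ∨ 2 * a - b < x → β x = x := fun x h => by
    rw [hβ]; exact natCycle_fix _ _ _ (by omega)
  subst hn hσ
  by_cases hb : b = 1
  · subst hb
    rw [if_pos rfl]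
    rw [show a - 1 + 1 = a by omega] at hβmid hβlast hβfix
    simp only [Equiv.Perm.mul_apply, pow_two]
    have hα2 : α (a - 1) = a := by rw [hαmid (a-1) (by omega) (by omega)]; omega
    constructor
    · rw [hβfix (a-1) (by omega), hβfix (a-1) (by omega), hα2,
        hinv β _ _ hβlast, hinv α _ _ (hαfix (2*a-1) (by omega))]
    · rw [hβlast, hβmid a (by omega) (by omega), hαfix (a+1) (by omega),
        hinv β _ _ (hβmid a (by omega) (by omega)), hinv α _ _ hα2]
  · rw [if_neg hb]
    simp only [Equiv.Perm.mul_apply]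
    constructor
    · rw [hβfix (a-b) (by omega), hαmid (a-b) (by omega) (by omega),
        hinv β _ _ hβlast, hinv α _ _ (hαfix (2*a-b) (by omega))]
    · rw [hβlast, hαmid (a-b+1) (by omega) (by omega),
        hinv β _ _ (hβmid (a-b+1) (by omega) (by omega)),
        hinv α _ _ (hαmid (a-b) (by omega) (by omega))]
end
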